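/- Let p_u = ⟨u, u₁, ..., u_*, T⟩ and p_v = ⟨v, v₁, ..., v_*, T⟩ be two paths of equal length d ending at a common node T, sharing no nodes except T. Let X' arise from applying the same sequence of mean-pooling linear message passing operations (with shared weight matrices W¹,...,W^{d-2}) along each path up to u_* and v_* respectively, followed by the final aggregation X'[T] = ((X[T] + X'[u_*] + X'[v_*])/3)·W^T. Let X̃ equal X except that the features of u and v are swapped: X̃[u] = X[v], X̃[v] = X[u], and let X̃'[T] be the analogous aggregation with X̃. Then X'[T] = X̃'[T]. -/

import Mathlib

open Matrix

/-!
The aggregate at `T` sees the two path iterates only through their sum, and by linearity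
the sum of the two iterates obeys the same mean-pooling recursion, driven by the summed
features `U i + V i`, whether or not the start features are swapped. Its initial value
`U 0 + V 0` is symmetric too, so the sums agree at every level.
-/

theorem Nat.eq_of_le_of_recurrence {α : Type*} (f : ℕ → α → α) (m : ℕ) {S S' : ℕ → α}
    (h0 : S 0 = S' 0)
    (hS : ∀ i, 1 ≤ i → i ≤ m → S i = f i (S (i - 1)))
    (hS' : ∀ i, 1 ≤ i → i ≤ m → S' i = f i (S' (i - 1))) :
    ∀ i ≤ m, S i = S' i := by
  intro i
  induction i with
  | zero => exact fun _ => h0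
  | succ k ih =>
    intro hk
    rw [hS _ k.succ_pos hk, hS' _ k.succ_pos hk, Nat.succ_sub_one, ih (by omega)]

theorem Matrix.smul_add_vecMul_add_smul_add_vecMul {m R : Type*} [Fintype m] [Semiring R]
    (c : R) (x y x' y' : m → R) (W : Matrix m m R) :
    (c • (x + y)) ᵥ* W + (c • (x' + y')) ᵥ* W = (c • ((x + x') + (y + y'))) ᵥ* W := by
  rw [← add_vecMul, ← smul_add, add_add_add_comm]

/-- `U i`, `V i` are the features of the `i`-th nodes of the paths from `u` and `v`, so that
`U (D-2)`, `V (D-2)` belong to `u_*`, `v_*`; `Yu, Yv` are the path-passing iterates for `X`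
and `Zu, Zv` those for the swapped features `X̃`. -/
theorem lmpp_swap_invariance_mean_general (n D : ℕ)
    (U V : ℕ → Fin n → ℝ) (XT : Fin n → ℝ)
    (W : ℕ → Matrix (Fin n) (Fin n) ℝ) (WT : Matrix (Fin n) (Fin n) ℝ)
    (Yu Yv Zu Zv : ℕ → Fin n → ℝ)
    (hYu0 : Yu 0 = U 0) (hYv0 : Yv 0 = V 0)
    (hZu0 : Zu 0 = V 0) (hZv0 : Zv 0 = U 0)
    (hYu : ∀ i, 1 ≤ i → i ≤ D - 2 →
      Yu i = ((1 / 2 : ℝ) • (Yu (i - 1) + U i)) ᵥ* W i)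
    (hYv : ∀ i, 1 ≤ i → i ≤ D - 2 →
      Yv i = ((1 / 2 : ℝ) • (Yv (i - 1) + V i)) ᵥ* W i)
    (hZu : ∀ i, 1 ≤ i → i ≤ D - 2 →
      Zu i = ((1 / 2 : ℝ) • (Zu (i - 1) + U i)) ᵥ* W i)
    (hZv : ∀ i, 1 ≤ i → i ≤ D - 2 →
      Zv i = ((1 / 2 : ℝ) • (Zv (i - 1) + V i)) ᵥ* W i) :
    ((1 / 3 : ℝ) • (XT + Yu (D - 2) + Yv (D - 2))) ᵥ* WT
      = ((1 / 3 : ℝ) • (XT + Zu (D - 2) + Zv (D - 2))) ᵥ* WT := by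
  have sums_eq : Yu (D - 2) + Yv (D - 2) = Zu (D - 2) + Zv (D - 2) :=
    Nat.eq_of_le_of_recurrence (fun i s => ((1 / 2 : ℝ) • (s + (U i + V i))) ᵥ* W i) (D - 2)
      (S := Yu + Yv) (S' := Zu + Zv)
      (by simp only [Pi.add_apply, hYu0, hYv0, hZu0, hZv0, add_comm])
      (fun i h1 h2 => by
        simp only [Pi.add_apply, hYu i h1 h2, hYv i h1 h2,
          smul_add_vecMul_add_smul_add_vecMul])
      (fun i h1 h2 => by
        simp only [Pi.add_apply, hZu i h1 h2, hZv i h1 h2,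
          smul_add_vecMul_add_smul_add_vecMul])
      (D - 2) le_rfl
  rw [add_assoc, add_assoc, sums_eq]

/-- Proposition 1 core (mean pooling): two start nodes at equal distance `D` from a common
target `T`, whose paths to `T` share the per-level weight matrices, are equivalent under
linear message path passing — swapping the two start features leaves the aggregate at `T`
unchanged. `U i` (resp. `V i`) is the feature of the `i`-th node on the path from `u`
(resp. `v`), so `U 0 = X[u]`, `V 0 = X[v]`, and `U (D-2)`, `V (D-2)` are the features of
`u_*`, `v_*`. `Yu, Yv` are the path-passing iterates for `X`, and `Zu, Zv` those for the
swapped features `X̃`. -/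
theorem lmpp_swap_invariance_mean (n D : ℕ) (hD : 2 ≤ D)
    (U V : ℕ → Fin n → ℝ) (XT : Fin n → ℝ)
    (W : ℕ → Matrix (Fin n) (Fin n) ℝ) (WT : Matrix (Fin n) (Fin n) ℝ)
    (Yu Yv Zu Zv : ℕ → Fin n → ℝ)
    (hYu0 : Yu 0 = U 0) (hYv0 : Yv 0 = V 0)
    (hZu0 : Zu 0 = V 0) (hZv0 : Zv 0 = U 0)
    (hYu : ∀ i, 1 ≤ i → i ≤ D - 2 →
      Yu i = ((1 / 2 : ℝ) • (Yu (i - 1) + U i)) ᵥ* W i)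
    (hYv : ∀ i, 1 ≤ i → i ≤ D - 2 →
      Yv i = ((1 / 2 : ℝ) • (Yv (i - 1) + V i)) ᵥ* W i)
    (hZu : ∀ i, 1 ≤ i → i ≤ D - 2 →
      Zu i = ((1 / 2 : ℝ) • (Zu (i - 1) + U i)) ᵥ* W i)
    (hZv : ∀ i, 1 ≤ i → i ≤ D - 2 →
      Zv i = ((1 / 2 : ℝ) • (Zv (i - 1) + V i)) ᵥ* W i) :
    ((1 / 3 : ℝ) • (XT + Yu (D - 2) + Yv (D - 2))) ᵥ* WT
      = ((1 / 3 : ℝ) • (XT + Zu (D - 2) + Zv (D - 2))) ᵥ* WT :=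
  lmpp_swap_invariance_mean_general n D U V XT W WT Yu Yv Zu Zv hYu0 hYv0 hZu0 hZv0 hYu hYv hZu hZv
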